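/- If gradient approximations satisfy ‖g − ĝ‖ ≤ τ_g ‖ĝ‖ with 0 ≤ τ_g < 1 and ĝ ≠ 0, then the cosine of the angle θ between g and ĝ satisfies cos θ = ⟨g, ĝ⟩/(‖g‖‖ĝ‖) ≥ (1 − τ_g²)/√(1 + τ_g²). -/

import Mathlib

open RealInnerProductSpace

/-- If `‖g − gh‖ ≤ τ‖gh‖` with `0 ≤ τ < 1`, then the cosine of the angle between
`g` and `gh` is at least `(1 − τ²)/√(1 + τ²)`. -/
theorem gradient_angle_bound (n : ℕ) (g gh : EuclideanSpace ℝ (Fin n))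
    (hgh : gh ≠ 0) (τ : ℝ) (hτ0 : 0 ≤ τ) (hτ1 : τ < 1)
    (h : ‖g - gh‖ ≤ τ * ‖gh‖) :
    (1 - τ ^ 2) / Real.sqrt (1 + τ ^ 2) ≤ (inner ℝ g gh : ℝ) / (‖g‖ * ‖gh‖) := by
  have hgh' : 0 < ‖gh‖ := norm_pos_iff.mpr hgh
  have hτ2 : (0:ℝ) ≤ 1 - τ ^ 2 := by nlinarith
  have hg : 0 < ‖g‖ := by
    rcases eq_or_ne g 0 with rfl | hg
    · rw [zero_sub, norm_neg] at h; nlinarith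
    · exact norm_pos_iff.mpr hg
  have hsq : ‖g - gh‖ ^ 2 ≤ τ ^ 2 * ‖gh‖ ^ 2 := by
    nlinarith [norm_nonneg (g - gh)]
  have hexp : ‖g - gh‖ ^ 2 = ‖g‖ ^ 2 - 2 * (inner ℝ g gh : ℝ) + ‖gh‖ ^ 2 := by
    rw [@norm_sub_sq_real]
  set s := Real.sqrt (1 - τ ^ 2) with hs
  have hs2 : s ^ 2 = 1 - τ ^ 2 := Real.sq_sqrt hτ2
  have hs0 : 0 ≤ s := Real.sqrt_nonneg _
  have key : s * (‖g‖ * ‖gh‖) ≤ (inner ℝ g gh : ℝ) := by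
    nlinarith [sq_nonneg (‖g‖ - s * ‖gh‖)]
  have step1 : s ≤ (inner ℝ g gh : ℝ) / (‖g‖ * ‖gh‖) := by
    rw [le_div_iff₀ (by positivity)]; linarith
  refine le_trans ?_ step1
  have h1 : s ≤ Real.sqrt (1 + τ ^ 2) := by
    apply Real.sqrt_le_sqrt; nlinarith
  have h2 : (0:ℝ) < Real.sqrt (1 + τ ^ 2) := Real.sqrt_pos.mpr (by positivity)
  rw [div_le_iff₀ h2]
  calc 1 - τ ^ 2 = s * s := by rw [← hs2]; ring
    _ ≤ s * Real.sqrt (1 + τ ^ 2) := mul_le_mul_of_nonneg_left h1 hs0
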